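/- arXiv:1311.4588 — 4 statements merged into one kernel-verified Lean document; each statement's English description precedes it below -/
import Mathlib

section
/- For the linear scalar Parareal iteration with fine factor f ∈ ℂ and coarse factor g ∈ ℂ, the error after k iterations at time slice n satisfies |e^k_n| ≤ binomial(n−1, k) · |f − g|^k · (max(1,|g|))^{n−1−k} · max_m |e^0_m| for n ≥ k+1, and e^k_n = 0 for n ≤ k. -/
/-- Superlinear bound for the linear scalar Parareal error. -/
theorem parareal_linear_error_bound
    (f g : ℂ) (e : ℕ → ℕ → ℂ) (M : ℝ)
    (h0 : ∀ k, e k 0 = 0)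
    (hrec : ∀ k n, e (k + 1) (n + 1) = g * e (k + 1) n + (f - g) * e k n)
    (hM : ∀ m, ‖e 0 m‖ ≤ M) :
    (∀ k n, n ≤ k → e k n = 0) ∧
      (∀ k n, k + 1 ≤ n →
        ‖e k n‖ ≤
          ((n - 1).choose k : ℝ) * ‖f - g‖ ^ k *
            max 1 ‖g‖ ^ (n - 1 - k) * M) := by
  have hM0 : 0 ≤ M := le_trans (norm_nonneg _) (hM 0)
  set C := ‖f - g‖ with hCdef
  set G := max 1 ‖g‖ with hGdef
  have hG1 : (1 : ℝ) ≤ G := le_max_left _ _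
  have hG0 : (0 : ℝ) ≤ G := by linarith
  have hgG : ‖g‖ ≤ G := le_max_right _ _
  have hC0 : 0 ≤ C := norm_nonneg _
  have hzero : ∀ k n, n ≤ k → e k n = 0 := by
    intro k
    induction k with
    | zero =>
      intro n hn
      interval_cases n
      exact h0 0
    | succ k ih =>
      intro n
      induction n with
      | zero => intro _; exact h0 _
      | succ n ihn =>
        intro hn
        rw [hrec, ihn (by omega), ih n (by omega)]
        ring
  refine ⟨hzero, ?_⟩
  have key : ∀ k n, ‖e k n‖ ≤
      ((n - 1).choose k : ℝ) * C ^ k * G ^ (n - 1 - k) * M := by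
    intro k
    induction k with
    | zero =>
      intro n
      simp only [Nat.choose_zero_right, Nat.cast_one, pow_zero, one_mul, Nat.sub_zero, mul_one]
      calc ‖e 0 n‖ ≤ M := hM n
        _ = 1 * M := (one_mul M).symm
        _ ≤ G ^ (n - 1) * M := by
            apply mul_le_mul_of_nonneg_right _ hM0
            exact one_le_pow₀ hG1
    | succ k ih =>
      intro n
      induction n with
      | zero =>
        rw [h0]
        simp only [norm_zero]
        positivity
      | succ n ihn =>
        by_cases hle : n ≤ k
        · rw [hzero (k + 1) (n + 1) (by omega)]
          simp only [norm_zero]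
          positivity
        · push_neg at hle
          have hb : ‖e (k + 1) (n + 1)‖ ≤
              G * (((n - 1).choose (k + 1) : ℝ) * C ^ (k + 1) * G ^ (n - 1 - (k + 1)) * M) +
              C * (((n - 1).choose k : ℝ) * C ^ k * G ^ (n - 1 - k) * M) := by
            rw [hrec]
            refine le_trans (norm_add_le _ _) ?_
            rw [norm_mul, norm_mul]
            refine add_le_add ?_ ?_
            · exact mul_le_mul hgG ihn (norm_nonneg _) hG0
            · exact mul_le_mul_of_nonneg_left (ih n) hC0
          refine hb.trans ?_
          simp only [Nat.add_sub_cancel]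
          rcases eq_or_lt_of_le (show k + 1 ≤ n from hle) with h1 | h2
          · -- n = k + 1
            subst h1
            simp only [Nat.succ_sub_one, Nat.choose_succ_self, Nat.choose_self,
              Nat.cast_zero, Nat.cast_one, Nat.sub_self, pow_zero,
              Nat.succ_sub_succ, Nat.add_sub_cancel]
            ring_nf
            simp [Nat.choose_eq_zero_of_lt (show k < 1 + k by omega)]
          · -- n ≥ k + 2
            have hp : n.choose (k + 1) = (n - 1).choose k + (n - 1).choose (k + 1) := by
              have h := Nat.choose_succ_succ (n - 1) k
              rw [show (n - 1).succ = n from by omega] at h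
              exact h
            have e1 : n - 1 - k = (n - 1 - (k + 1)) + 1 := by omega
            have e2 : n - (k + 1) = (n - 1 - (k + 1)) + 1 := by omega
            rw [e1, e2, hp]
            push_cast
            ring_nf
            exact le_rfl
  intro k n _
  exact key k n
end

section
/- If |g| < 1 and |f − g| < 1 − |g|, then for the linear scalar Parareal iteration, with M = sup_m |e^0_m| < ∞, one has |e^k_n| ≤ (|f−g|/(1−|g|))^k · M for all n, k, and in particular e^k_n → 0 uniformly in n as k → ∞. -/
/-- Uniform stability of linear Parareal when `|g| < 1` and `|f-g| < 1 - |g|`. -/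
theorem parareal_uniform_stability
    (f g : ℂ) (hg : ‖g‖ < 1)
    (hfg : ‖f - g‖ < 1 - ‖g‖)
    (e : ℕ → ℕ → ℂ) (M : ℝ)
    (h0 : ∀ k, e k 0 = 0)
    (hrec : ∀ k n, e (k + 1) (n + 1) = g * e (k + 1) n + (f - g) * e k n)
    (hM : ∀ m, ‖e 0 m‖ ≤ M) :
    (∀ k n, ‖e k n‖ ≤
        (‖f - g‖ / (1 - ‖g‖)) ^ k * M) ∧
      (∀ ε : ℝ, 0 < ε → ∃ K, ∀ k ≥ K, ∀ n, ‖e k n‖ < ε) := by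
  set r : ℝ := ‖f - g‖ / (1 - ‖g‖) with hr
  have hg1 : (0:ℝ) < 1 - ‖g‖ := by
    have := norm_nonneg (f - g); linarith
  have hr0 : 0 ≤ r := div_nonneg (norm_nonneg _) hg1.le
  have hr1 : r < 1 := (div_lt_one hg1).mpr hfg
  have hM0 : 0 ≤ M := by
    have := hM 0
    rw [h0 0] at this
    simpa using this
  have hkey : ‖g‖ * r + ‖f - g‖ = r := by
    rw [hr]
    field_simp
    ring
  have main : ∀ k n, ‖e k n‖ ≤ r ^ k * M := by
    intro k
    induction k with
    | zero => intro n; simpa using hM n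
    | succ k ih =>
      intro n
      induction n with
      | zero =>
        rw [h0]
        simpa using mul_nonneg (pow_nonneg hr0 _) hM0
      | succ n ihn =>
        rw [hrec k n]
        calc ‖g * e (k + 1) n + (f - g) * e k n‖
            ≤ ‖g * e (k + 1) n‖ + ‖(f - g) * e k n‖ :=
              norm_add_le _ _
          _ = ‖g‖ * ‖e (k + 1) n‖
              + ‖f - g‖ * ‖e k n‖ := by
              rw [norm_mul, norm_mul]
          _ ≤ ‖g‖ * (r ^ (k + 1) * M) + ‖f - g‖ * (r ^ k * M) := by
              gcongr <;> first
                | exact norm_nonneg _ | exact ihn | exact ih n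
          _ = (‖g‖ * r + ‖f - g‖) * (r ^ k * M) := by ring
          _ = r ^ (k + 1) * M := by rw [hkey]; ring
  refine ⟨main, fun ε hε => ?_⟩
  have htend : Filter.Tendsto (fun k => r ^ k * M) Filter.atTop (nhds 0) := by
    simpa using (tendsto_pow_atTop_nhds_zero_of_lt_one hr0 hr1).mul_const M
  have := (htend.eventually (gt_mem_nhds hε)).exists
  obtain ⟨K, hK⟩ := this
  refine ⟨K, fun k hk n => lt_of_le_of_lt (main k n) ?_⟩
  calc r ^ k * M ≤ r ^ K * M :=
        mul_le_mul_of_nonneg_right (pow_le_pow_of_le_one hr0 hr1.le hk) hM0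
    _ < ε := hK
end

section
/- Convergence factor bound for linear Parareal: with U^k_n as in the scalar linear iteration and U_n = f^n·u_0 the exact fine solution, if |g| ≤ 1 then max_{0≤n≤N} |U^{k+1}_n − U_n| ≤ N·|f−g| · max_{0≤n≤N} |U^k_n − U_n|, so Parareal converges at least linearly with factor N·|f−g| whenever N·|f−g| < 1. -/
theorem norm_le_nat_mul_of_recurrence {R : Type*} [SeminormedRing R] {N : ℕ} {g c : R} {M : ℝ}
    {e d : ℕ → R} (he : e 0 = 0) (hg : ‖g‖ ≤ 1)
    (hrec : ∀ n < N, e (n + 1) = g * e n + c * d n) (hd : ∀ n < N, ‖d n‖ ≤ M) :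
    ∀ n ≤ N, ‖e n‖ ≤ n * ‖c‖ * M := by
  intro n hn
  induction n with
  | zero => simp [he]
  | succ m ih =>
    have hm : m < N := hn
    have ihm := ih hm.le
    calc ‖e (m + 1)‖ = ‖g * e m + c * d m‖ := by rw [hrec m hm]
      _ ≤ ‖g‖ * ‖e m‖ + ‖c‖ * ‖d m‖ :=
        (norm_add_le _ _).trans (add_le_add (norm_mul_le _ _) (norm_mul_le _ _))
      _ ≤ 1 * (m * ‖c‖ * M) + ‖c‖ * M := by gcongr; exact hd m hm
      _ = (m + 1 : ℕ) * ‖c‖ * M := by push_cast; ring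

/-- Linear convergence of Parareal with factor `N * |f - g|` when `|g| ≤ 1`. -/
theorem parareal_linear_convergence_factor
    (N : ℕ) (f g u0 : ℂ) (hg : ‖g‖ ≤ 1)
    (U : ℕ → ℕ → ℂ)
    (hinit : ∀ k, U k 0 = u0)
    (hrec : ∀ k n, n < N → U (k + 1) (n + 1) = g * U (k + 1) n + (f - g) * U k n) :
    ∀ k, ∀ M : ℝ, (∀ n ≤ N, ‖U k n - f ^ n * u0‖ ≤ M) →
      ∀ n ≤ N, ‖U (k + 1) n - f ^ n * u0‖
        ≤ N * ‖f - g‖ * M := by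
  intro k M hM n hn
  have hM0 : 0 ≤ M := (norm_nonneg _).trans (hM 0 N.zero_le)
  -- The exact solution `n ↦ f ^ n * u0` is a fixed point of the Parareal update, so the errors
  -- obey the same recurrence, forced by the previous iterate's error.
  have herr := norm_le_nat_mul_of_recurrence (c := f - g)
    (e := fun m => U (k + 1) m - f ^ m * u0)
    (d := fun m => U k m - f ^ m * u0) (by simp [hinit]) hg
    (fun m hm => by simp only [hrec k m hm]; ring) (fun m hm => hM m hm.le) n hn
  calc ‖U (k + 1) n - f ^ n * u0‖ ≤ n * ‖f - g‖ * M := herr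
    _ ≤ N * ‖f - g‖ * M := by gcongr
end

section
/- Damping of the Parareal error recurrence under strong coarse contraction: if |g| ≤ γ < 1 and |f − g| ≤ δ, then for every bounded initial error sequence with e^0_0 = 0, sup_n |e^k_n| ≤ (δ/(1−γ))^k · sup_n |e^0_n| for all k ≥ 0. -/
/-!
A single Parareal sweep `u (n+1) = g u n + h v n` started from `u 0 = 0` is damped by the contraction
`‖g‖ ≤ γ < 1`: a uniform bound `B` on the driving sequence `v` propagates to the uniform bound
`δ / (1 - γ) * B` on `u`, because `C = δ / (1 - γ)` is the fixed point of `C ↦ γ C + δ`.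
Iterating this over the Parareal index `k` gives the geometric factor `(δ / (1 - γ)) ^ k`.
-/

theorem norm_le_of_contractive_recurrence {R : Type*} [SeminormedRing R] {g h : R} {γ δ B : ℝ}
    {u v : ℕ → R} (hg : ‖g‖ ≤ γ) (hγ : γ < 1) (hh : ‖h‖ ≤ δ) (hv : ∀ n, ‖v n‖ ≤ B)
    (hu0 : u 0 = 0) (hu : ∀ n, u (n + 1) = g * u n + h * v n) (n : ℕ) :
    ‖u n‖ ≤ δ / (1 - γ) * B := by
  have hγ0 : 0 ≤ γ := (norm_nonneg g).trans hg
  have hδ0 : 0 ≤ δ := (norm_nonneg h).trans hh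
  have hB : 0 ≤ B := (norm_nonneg _).trans (hv 0)
  have h1γ : 0 < 1 - γ := sub_pos.2 hγ
  set C := δ / (1 - γ)
  have hfix : γ * C + δ = C := by
    simp only [C]
    field_simp
    ring
  induction n with
  | zero => simpa [hu0] using mul_nonneg (div_nonneg hδ0 h1γ.le) hB
  | succ n ih =>
    calc ‖u (n + 1)‖ = ‖g * u n + h * v n‖ := by rw [hu]
      _ ≤ ‖g‖ * ‖u n‖ + ‖h‖ * ‖v n‖ :=
        (norm_add_le _ _).trans (add_le_add (norm_mul_le _ _) (norm_mul_le _ _))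
      _ ≤ γ * (C * B) + δ * B := by gcongr; exact hv n
      _ = C * B := by linear_combination B * hfix

theorem parareal_error_damping_general
    (γ δ : ℝ) (hγ : γ < 1)
    (f g : ℂ) (hg : ‖g‖ ≤ γ) (hfg : ‖f - g‖ ≤ δ)
    (e : ℕ → ℕ → ℂ) (M : ℝ)
    (h0 : ∀ k, e k 0 = 0)
    (hrec : ∀ k n, e (k + 1) (n + 1) = g * e (k + 1) n + (f - g) * e k n)
    (hM : ∀ n, ‖e 0 n‖ ≤ M) :
    ∀ k n, ‖e k n‖ ≤ (δ / (1 - γ)) ^ k * M := by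
  intro k
  induction k with
  | zero => simpa using hM
  | succ k ih =>
    intro n
    rw [pow_succ', mul_assoc]
    exact norm_le_of_contractive_recurrence hg hγ hfg ih (h0 (k + 1)) (hrec k) n

/-- Damping of the Parareal error under strong coarse contraction:
`sup_n |e^k_n| ≤ (δ/(1-γ))^k · sup_n |e^0_n|`. -/
theorem parareal_error_damping
    (γ δ : ℝ) (hγ0 : 0 ≤ γ) (hγ : γ < 1) (hδ : 0 ≤ δ)
    (f g : ℂ) (hg : ‖g‖ ≤ γ) (hfg : ‖f - g‖ ≤ δ)
    (e : ℕ → ℕ → ℂ) (M : ℝ)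
    (h0 : ∀ k, e k 0 = 0)
    (hrec : ∀ k n, e (k + 1) (n + 1) = g * e (k + 1) n + (f - g) * e k n)
    (hM : ∀ n, ‖e 0 n‖ ≤ M) :
    ∀ k n, ‖e k n‖ ≤ (δ / (1 - γ)) ^ k * M :=
  parareal_error_damping_general γ δ hγ f g hg hfg e M h0 hrec hM
end
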